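/- arXiv:1811.00465 — 10 statements merged into one kernel-verified Lean document; each statement's English description precedes it below -/
import Mathlib

section
/- For any N×N real matrix K and any subset J of {1,...,N}, the alternating sum over subsets S of the complement of J of (-1)^{|S|} det(K_{J∪S}) equals (-1)^{N-|J|} det(K - 1_{J̄}), where K_T denotes the principal submatrix of K indexed by T and 1_{J̄} is the diagonal matrix with ones on the diagonal entries indexed by the complement of J and zeros elsewhere. -/
open Matrix BigOperators

/-- Principal minor of `K` indexed by the subset `J`. -/
def pm {N : ℕ} (K : Matrix (Fin N) (Fin N) ℝ) (J : Finset (Fin N)) : ℝ :=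
  (K.submatrix (fun i : J => (i : Fin N)) (fun j : J => (j : Fin N))).det

/-- Diagonal 0/1 matrix supported on `J`. -/
def ind {N : ℕ} (J : Finset (Fin N)) : Matrix (Fin N) (Fin N) ℝ :=
  Matrix.diagonal (fun i => if i ∈ J then (1 : ℝ) else 0)

/-!
Expanding `det (K - 1_{J̄})` multilinearly in the rows, row `i ∈ J̄` is either the row of `K`
or `-eᵢ`. Choosing `-eᵢ` exactly on `T ⊆ J̄` contributes `(-1)^|T|` times the principal minor of
`K` on `Tᶜ`, and the substitution `T = J̄ \ S` turns this expansion into the alternating sum.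
-/

theorem Matrix.det_diagonal_add {n R : Type*} [Fintype n] [DecidableEq n] [CommRing R]
    (d : n → R) (M : Matrix n n R) :
    det (diagonal d + M) =
      ∑ s : Finset n, (∏ i ∈ s, d i) * det (M.submatrix ((↑) : ↥sᶜ → n) (↑)) := by
  refine (detRowAlternating.toMultilinearMap.map_add_univ (diagonal d) M).trans
    (Finset.sum_congr rfl fun s _ => ?_)
  let B : n → n → R := sᶜ.piecewise M.row (row 1)
  have hB : s.piecewise (diagonal d) M = s.piecewise (fun i => d i • B i) B := by
    ext i j
    by_cases hi : i ∈ s <;> simp [B, hi, Finset.piecewise, diagonal, one_apply]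
  rw [hB]
  exact (detRowAlternating.toMultilinearMap.map_piecewise_smul d B s).trans
    (congrArg _ (det_piecewise_one_eq_submatrix_det M sᶜ))

lemma det_sub_ind {N : ℕ} (K : Matrix (Fin N) (Fin N) ℝ) (C : Finset (Fin N)) :
    (K - ind C).det = ∑ s ∈ C.powerset, (-1 : ℝ) ^ s.card * pm K sᶜ := by
  rw [sub_eq_neg_add, ind, diagonal_neg, det_diagonal_add]
  refine (Finset.sum_subset (Finset.subset_univ _) fun s _ hs => ?_).symm.trans
    (Finset.sum_congr rfl fun s hs => ?_)
  · obtain ⟨i, his, hiC⟩ := Finset.not_subset.mp (Finset.mem_powerset.not.mp hs)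
    rw [Finset.prod_eq_zero his (by simp [hiC]), zero_mul]
  · rw [Finset.prod_congr rfl fun i hi => by rw [if_pos (Finset.mem_powerset.mp hs hi)],
      Finset.prod_const]
    rfl

lemma neg_one_pow_mul_neg_one_pow_sub {R : Type*} [Monoid R] [HasDistribNeg R] {a b : ℕ}
    (h : b ≤ a) :
    (-1 : R) ^ a * (-1) ^ (a - b) = (-1) ^ b := by
  obtain ⟨c, rfl⟩ := Nat.exists_eq_add_of_le h
  rw [Nat.add_sub_cancel_left, pow_add, mul_assoc, ← pow_add, Even.neg_one_pow ⟨c, rfl⟩, mul_one]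

theorem stmt_0 {N : ℕ} (K : Matrix (Fin N) (Fin N) ℝ) (J : Finset (Fin N)) :
    ∑ S ∈ Jᶜ.powerset, (-1 : ℝ) ^ S.card * pm K (J ∪ S)
      = (-1 : ℝ) ^ (N - J.card) * (K - ind Jᶜ).det := by
  rw [det_sub_ind, Finset.mul_sum]
  refine Finset.sum_nbij' (Jᶜ \ ·) (Jᶜ \ ·) (by simp) (by simp)
    (fun S hS => Finset.sdiff_sdiff_eq_self (Finset.mem_powerset.mp hS))
    (fun S hS => Finset.sdiff_sdiff_eq_self (Finset.mem_powerset.mp hS)) fun S hS => ?_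
  have hS : S ⊆ Jᶜ := Finset.mem_powerset.mp hS
  have hcompl : (Jᶜ \ S)ᶜ = J ∪ S := by
    rw [sdiff_eq, compl_inf, compl_compl, compl_compl]
    rfl
  have hJc : Jᶜ.card = N - J.card := by rw [Finset.card_compl, Fintype.card_fin]
  rw [hcompl, Finset.card_sdiff_of_subset hS, ← hJc, ← mul_assoc,
    neg_one_pow_mul_neg_one_pow_sub (Finset.card_le_card hS)]
end

section
/- For any N×N real matrix K, the sum over all subsets J of {1,...,N} of (-1)^{|J̄|} det(K - 1_{J̄}) equals 1. -/
open Matrix BigOperators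

/-! Row-wise multilinearity of the determinant. Since `1 = K + (1 - K)`, expanding `det 1` over
the rows gives `1 = ∑ J, det M_J`, where `M_J` takes the rows of `K` on `J` and those of `1 - K`
off `J`. The rows of `K - 1_{J̄}` off `J` are those of `M_J` negated, so
`det (K - 1_{J̄}) = (-1)^|J̄| det M_J`. -/

namespace Matrix

variable {n R : Type*} [Fintype n] [DecidableEq n] [CommRing R]

theorem det_add_eq_sum_det_piecewise (A B : Matrix n n R) :
    (A + B).det = ∑ s : Finset n, (of (s.piecewise A B)).det :=
  detRowAlternating.map_add_univ A B

theorem det_piecewise_neg (A B : Matrix n n R) (s : Finset n) :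
    (of (s.piecewise A (-B : Matrix n n R))).det =
      (-1) ^ sᶜ.card * (of (s.piecewise A B)).det := by
  have hrows : s.piecewise A (-B : Matrix n n R) =
      sᶜ.piecewise (fun i => (-1 : R) • s.piecewise A B i) (s.piecewise A B) := by
    ext i j
    by_cases hi : i ∈ s <;> simp [Finset.piecewise, hi]
  rw [hrows, ← Finset.prod_const, ← smul_eq_mul]
  exact detRowAlternating.map_piecewise_smul (fun _ => -1) _ sᶜ

end Matrix

theorem sub_ind_compl_eq_piecewise {N : ℕ} (K : Matrix (Fin N) (Fin N) ℝ) (J : Finset (Fin N)) :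
    K - ind Jᶜ = of (J.piecewise K (-(1 - K) : Matrix (Fin N) (Fin N) ℝ)) := by
  ext i j
  by_cases hi : i ∈ J <;> simp [Finset.piecewise, ind, hi, Matrix.one_apply, Matrix.diagonal_apply]

theorem stmt_1 {N : ℕ} (K : Matrix (Fin N) (Fin N) ℝ) :
    ∑ J : Finset (Fin N), (-1 : ℝ) ^ (Jᶜ.card) * (K - ind Jᶜ).det = 1 := by
  calc ∑ J : Finset (Fin N), (-1 : ℝ) ^ (Jᶜ.card) * (K - ind Jᶜ).det
      = ∑ J : Finset (Fin N), (of (J.piecewise K (1 - K : Matrix (Fin N) (Fin N) ℝ))).det := by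
        refine Finset.sum_congr rfl fun J _ => ?_
        rw [sub_ind_compl_eq_piecewise, det_piecewise_neg, ← mul_assoc, ← mul_pow, neg_one_mul,
          neg_neg, one_pow, one_mul]
    _ = (K + (1 - K)).det := (det_add_eq_sum_det_piecewise K (1 - K)).symm
    _ = 1 := by rw [add_sub_cancel, det_one]
end

section
/- Let K be an N×N real matrix such that (-1)^{|J|} det(K - 1_J) ≥ 0 for all subsets J of {1,...,N}. Then the numbers p_J := (-1)^{|J̄|} det(K - 1_{J̄}) define a probability mass function on subsets of {1,...,N} (they are nonnegative and sum to 1), and the random subset Y with P[Y = J] = p_J satisfies P[J ⊆ Y] = det(K_J) for all J. -/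
open Matrix BigOperators

/-!
Write `M_S` for the matrix whose `i`-th row is `K i` for `i ∈ S` and `e_i - K i` for `i ∉ S`;
negating the rows off `S` shows `det M_S = (-1)^|S̄| det (K - 1_{S̄})`. By multilinearity of the
determinant in the rows `i ∉ J`, summing `det M_S` over `S ⊇ J` replaces each such row by
`K i + (e_i - K i) = e_i`, and the resulting determinant is the principal minor `det K_J`.
Taking `J = ∅` gives total mass `1`.
-/

namespace Matrix
variable {n R : Type*} [Fintype n] [DecidableEq n] [CommRing R]

theorem det_piecewise_one_sub (A : Matrix n n R) (s : Finset n) :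
    det (of (s.piecewise A (1 - A : Matrix n n R))) =
      (-1) ^ sᶜ.card * det (A - diagonal fun i => if i ∈ sᶜ then 1 else 0) := by
  have h : of (s.piecewise A (1 - A : Matrix n n R)) =
      (diagonal fun i => if i ∈ sᶜ then -1 else 1) *
        (A - diagonal fun i => if i ∈ sᶜ then 1 else 0) := by
    ext i j
    by_cases hi : i ∈ s <;> simp [Finset.piecewise, hi, one_apply, diagonal_apply]
  rw [h, det_mul, det_diagonal, Finset.prod_ite_mem, Finset.univ_inter, Finset.prod_const]

theorem det_piecewise_one (A : Matrix n n R) (s : Finset n) :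
    det (of (s.piecewise A (1 : Matrix n n R))) =
      det (A.submatrix ((↑) : s → n) ((↑) : s → n)) := by
  rw [twoBlockTriangular_det _ (· ∈ s)]
  · have h1 : toSquareBlockProp (of (s.piecewise A (1 : Matrix n n R))) (· ∉ s) = 1 := by
      ext i j
      simp [toSquareBlockProp_def, Finset.piecewise, i.2, one_apply, Subtype.ext_iff]
    have h2 : toSquareBlockProp (of (s.piecewise A (1 : Matrix n n R))) (· ∈ s) =
        A.submatrix ((↑) : s → n) ((↑) : s → n) := by
      ext i j
      simp [toSquareBlockProp_def, Finset.piecewise]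
    rw [h1, h2, det_one, mul_one]
    convert rfl
  · intro i hi j hj
    have hij : i ≠ j := fun h => hi (h ▸ hj)
    simp [Finset.piecewise, hi, hij]

theorem sum_det_piecewise_one_sub (A : Matrix n n R) (t : Finset n) :
    ∑ s with t ⊆ s, det (of (s.piecewise A (1 - A : Matrix n n R))) =
      det (of (t.piecewise A (1 : Matrix n n R))) := by
  set B : Matrix n n R := of (t.piecewise (0 : Matrix n n R) (1 - A : Matrix n n R))
  have hrows : of (t.piecewise A (1 : Matrix n n R)) = A + B := by
    ext i j; by_cases hi : i ∈ t <;> simp [B, Finset.piecewise, hi]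
  have hterm (s : Finset n) : det (of (s.piecewise A B)) =
      if t ⊆ s then det (of (s.piecewise A (1 - A : Matrix n n R))) else 0 := by
    split_ifs with hts
    · congr 2
      ext i j
      by_cases hi : i ∈ s
      · simp [Finset.piecewise, hi]
      · have hit : i ∉ t := fun h => hi (hts h)
        simp [B, Finset.piecewise, hi, hit]
    · obtain ⟨i, hit, his⟩ := Finset.not_subset.mp hts
      refine detRowAlternating.map_coord_zero i (funext fun j => ?_)
      simp [B, Finset.piecewise, hit, his]
  rw [Finset.sum_filter, hrows]
  simp_rw [← hterm]
  exact (detRowAlternating.toMultilinearMap.map_add_univ A B).symm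

end Matrix

theorem stmt_2 {N : ℕ} (K : Matrix (Fin N) (Fin N) ℝ)
    (hadm : ∀ J : Finset (Fin N), 0 ≤ (-1 : ℝ) ^ J.card * (K - ind J).det) :
    (∀ J : Finset (Fin N), 0 ≤ (-1 : ℝ) ^ (Jᶜ.card) * (K - ind Jᶜ).det) ∧
    (∑ J : Finset (Fin N), (-1 : ℝ) ^ (Jᶜ.card) * (K - ind Jᶜ).det = 1) ∧
    (∀ J : Finset (Fin N),
      ∑ S ∈ Finset.univ.filter (fun S : Finset (Fin N) => J ⊆ S),
        (-1 : ℝ) ^ (Sᶜ.card) * (K - ind Sᶜ).det = pm K J) := by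
  have hsign (S : Finset (Fin N)) : (-1 : ℝ) ^ Sᶜ.card * (K - ind Sᶜ).det =
      det (of (S.piecewise K (1 - K : Matrix (Fin N) (Fin N) ℝ))) :=
    (det_piecewise_one_sub K S).symm
  have hincl (J : Finset (Fin N)) :
      ∑ S with J ⊆ S, (-1 : ℝ) ^ Sᶜ.card * (K - ind Sᶜ).det = pm K J := by
    simp_rw [hsign]
    rw [sum_det_piecewise_one_sub, det_piecewise_one]
    rfl
  refine ⟨fun J => hadm Jᶜ, ?_, hincl⟩
  simpa [pm] using hincl ∅
end

section
/- Let L be an N×N real matrix with I + L invertible, and set K = L(I+L)^{-1}. Then for every subset J of {1,...,N}, det(K_J) equals the sum over subsets S with J ⊆ S ⊆ {1,...,N} of det(L_S)/det(I+L). (That is, an L-ensemble with matrix L is a DPP with kernel K.) -/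
open Matrix BigOperators

lemma det_piece {N : ℕ} (M : Matrix (Fin N) (Fin N) ℝ) (S : Finset (Fin N)) :
    (Matrix.of fun i j => if i ∈ S then M i j else if i = j then (1:ℝ) else 0).det = pm M S := by
  classical
  let e : {x : Fin N // x ∈ S} ⊕ {x : Fin N // ¬ x ∈ S} ≃ Fin N := Equiv.sumCompl _
  rw [← Matrix.det_submatrix_equiv_self e]
  have heq : (Matrix.of fun i j => if i ∈ S then M i j else if i = j then (1:ℝ) else 0).submatrix e e
      = Matrix.fromBlocks (M.submatrix (fun i : S => (i:Fin N)) (fun j : S => (j:Fin N)))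
          (M.submatrix (fun i : S => (i:Fin N)) (fun j : {x : Fin N // ¬ x ∈ S} => (j:Fin N))) 0 1 := by
    ext i j
    rcases i with i | i <;> rcases j with j | j <;>
      simp [e, Equiv.sumCompl, i.2, j.2, Matrix.one_apply, Subtype.ext_iff]
    · intro hij
      exact absurd (hij ▸ j.2) i.2
  rw [heq, Matrix.det_fromBlocks_zero₂₁, Matrix.det_one, mul_one]
  rfl

lemma det_add_ind {N : ℕ} (L : Matrix (Fin N) (Fin N) ℝ) (J : Finset (Fin N)) :
    (L + ind Jᶜ).det = ∑ S ∈ Finset.univ.filter (fun S : Finset (Fin N) => J ⊆ S), pm L S := by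
  classical
  have hexp : (L + ind Jᶜ).det
      = ∑ s : Finset (Fin N), Matrix.det (Matrix.of (s.piecewise L (ind Jᶜ))) := by
    have := (Matrix.detRowAlternating (R := ℝ) (n := Fin N)).toMultilinearMap.map_add_univ
      (L : Fin N → Fin N → ℝ) (ind Jᶜ)
    exact this
  rw [hexp, ← Finset.sum_filter_add_sum_filter_not Finset.univ
    (fun s : Finset (Fin N) => J ⊆ s)]
  have h2 : ∑ s ∈ Finset.univ.filter (fun s : Finset (Fin N) => ¬ J ⊆ s),
      Matrix.det (Matrix.of (s.piecewise L (ind Jᶜ))) = 0 := by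
    apply Finset.sum_eq_zero
    intro s hs
    simp only [Finset.mem_filter] at hs
    obtain ⟨i, hiJ, his⟩ := Finset.not_subset.mp hs.2
    apply Matrix.det_eq_zero_of_row_eq_zero i
    intro j
    simp [Finset.piecewise, his, ind, Matrix.diagonal, hiJ]
  rw [h2, add_zero]
  apply Finset.sum_congr rfl
  intro s hs
  simp only [Finset.mem_filter] at hs
  rw [← det_piece L s]
  congr 1
  ext i j
  by_cases hi : i ∈ s
  · simp [Finset.piecewise, hi]
  · have hiJ : i ∉ J := fun hiJ => hi (hs.2 hiJ)
    simp [Finset.piecewise, hi, ind, Matrix.diagonal, hiJ, Matrix.one_apply]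

theorem stmt_3 {N : ℕ} (L : Matrix (Fin N) (Fin N) ℝ) (h : (1 + L).det ≠ 0)
    (K : Matrix (Fin N) (Fin N) ℝ) (hK : K = L * (1 + L)⁻¹) (J : Finset (Fin N)) :
    pm K J = ∑ S ∈ Finset.univ.filter (fun S : Finset (Fin N) => J ⊆ S),
      pm L S / (1 + L).det := by
  classical
  have hKL : K * (1 + L) = L := by
    rw [hK, Matrix.mul_assoc, Matrix.nonsing_inv_mul _ (isUnit_iff_ne_zero.mpr h),
      Matrix.mul_one]
  set A : Matrix (Fin N) (Fin N) ℝ :=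
    Matrix.of fun i j => if i ∈ J then K i j else if i = j then 1 else 0 with hA
  have h1 : A.det = pm K J := det_piece K J
  have h2 : A * (1 + L) = L + ind Jᶜ := by
    ext i j
    by_cases hi : i ∈ J
    · have := congrFun (congrFun hKL i) j
      simp only [Matrix.mul_apply] at this ⊢
      simp only [hA, Matrix.of_apply, hi, if_true]
      simpa [ind, Matrix.diagonal, hi] using this
    · simp only [Matrix.mul_apply, hA, Matrix.of_apply, hi, if_false]
      rw [Finset.sum_eq_single i]
      · simp [ind, Matrix.diagonal, hi, Matrix.one_apply, Matrix.add_apply]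
        by_cases hij : i = j <;> simp [hij]
        · exact add_comm _ _
      · intro b _ hb
        simp [Ne.symm hb]
      · simp
  have h3 : A.det * (1 + L).det = (L + ind Jᶜ).det := by
    rw [← Matrix.det_mul, h2]
  rw [det_add_ind] at h3
  have hfinal : pm K J = (∑ S ∈ Finset.univ.filter (fun S : Finset (Fin N) => J ⊆ S),
      pm L S) / (1 + L).det := by
    rw [← h1, eq_div_iff h, h3]
  rw [hfinal, Finset.sum_div]
end

section
/- Let K be an N×N real matrix with I - K invertible and let L = K(I-K)^{-1}. Then for every subset J of {1,...,N}, (-1)^{|J̄|} det(K - 1_{J̄}) = det(L_J)/det(I+L). -/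
open Matrix BigOperators

lemma det_ind_mul_add {N : ℕ} (L : Matrix (Fin N) (Fin N) ℝ) (J : Finset (Fin N)) :
    (ind J * L + ind Jᶜ).det = pm L J := by
  classical
  let e : {i : Fin N // i ∈ J} ⊕ {i : Fin N // ¬ i ∈ J} ≃ Fin N := Equiv.sumCompl (· ∈ J)
  rw [← Matrix.det_submatrix_equiv_self e]
  have he : (ind J * L + ind Jᶜ).submatrix e e =
      Matrix.fromBlocks
        (L.submatrix (fun i : J => (i : Fin N)) (fun j : J => (j : Fin N)))
        (L.submatrix (fun i : J => (i : Fin N)) (fun j : {i : Fin N // ¬ i ∈ J} => (j : Fin N)))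
        0 1 := by
    ext i j
    cases i with
    | inl i =>
      cases j with
      | inl j =>
        simp [e, ind, Matrix.diagonal_mul, Matrix.diagonal_apply, i.2]
      | inr j =>
        simp [e, ind, Matrix.diagonal_mul, Matrix.diagonal_apply, i.2]
    | inr i =>
      cases j with
      | inl j =>
        have hne : (i : Fin N) ≠ (j : Fin N) := by
          intro hh
          exact i.2 (hh ▸ j.2)
        simp [e, ind, Matrix.diagonal_mul, Matrix.diagonal_apply, i.2, hne]
      | inr j =>
        have : ((i : Fin N) = (j : Fin N)) ↔ i = j := Subtype.coe_inj
        simp [e, ind, Matrix.diagonal_mul, Matrix.diagonal_apply, i.2, Matrix.one_apply, this]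
  rw [he, Matrix.det_fromBlocks_zero₂₁, Matrix.det_one, mul_one, pm]

theorem stmt_4 {N : ℕ} (K : Matrix (Fin N) (Fin N) ℝ) (h : (1 - K).det ≠ 0)
    (L : Matrix (Fin N) (Fin N) ℝ) (hL : L = K * (1 - K)⁻¹) (J : Finset (Fin N)) :
    (-1 : ℝ) ^ (Jᶜ.card) * (K - ind Jᶜ).det = pm L J / (1 + L).det := by
  classical
  have hinv : IsUnit (1 - K).det := isUnit_iff_ne_zero.mpr h
  have hmul : (1 - K)⁻¹ * (1 - K) = 1 := Matrix.nonsing_inv_mul _ hinv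
  have hL1 : (1 : Matrix (Fin N) (Fin N) ℝ) + L = (1 - K)⁻¹ := by
    rw [hL]
    have : (1 : Matrix (Fin N) (Fin N) ℝ) = (1 - K) * (1 - K)⁻¹ :=
      (Matrix.mul_nonsing_inv _ hinv).symm
    calc (1 : Matrix (Fin N) (Fin N) ℝ) + K * (1 - K)⁻¹
        = (1 - K) * (1 - K)⁻¹ + K * (1 - K)⁻¹ := by rw [← this]
      _ = ((1 - K) + K) * (1 - K)⁻¹ := by rw [add_mul]
      _ = (1 - K)⁻¹ := by rw [sub_add_cancel, one_mul]
  have hdet1L : (1 + L).det = ((1 - K).det)⁻¹ := by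
    rw [hL1, Matrix.det_nonsing_inv, Ring.inverse_eq_inv']
  -- D = ind J - ind Jᶜ
  set D : Matrix (Fin N) (Fin N) ℝ := ind J - ind Jᶜ with hD
  have hDdiag : D = Matrix.diagonal (fun i => if i ∈ J then (1 : ℝ) else -1) := by
    ext i j
    by_cases hi : i ∈ J <;>
      simp [hD, ind, Matrix.sub_apply, Matrix.diagonal_apply, hi]
  have hdetD : D.det = (-1 : ℝ) ^ (Jᶜ.card) := by
    rw [hDdiag, Matrix.det_diagonal]
    rw [← Finset.prod_mul_prod_compl J]
    have h1 : ∏ i ∈ J, (if i ∈ J then (1 : ℝ) else -1) = 1 :=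
      Finset.prod_eq_one (fun i hi => by simp [hi])
    have h2 : ∏ i ∈ Jᶜ, (if i ∈ J then (1 : ℝ) else -1) = (-1 : ℝ) ^ (Jᶜ.card) := by
      rw [Finset.prod_congr rfl (g := fun _ => (-1 : ℝ)) (fun i hi => by
        simp [Finset.mem_compl.mp hi]), Finset.prod_const]
    rw [h1, h2, one_mul]
  -- D * (K - ind Jᶜ) = D * K + ind Jᶜ
  have hDind : D * ind Jᶜ = - ind Jᶜ := by
    rw [hDdiag, ind, Matrix.diagonal_mul_diagonal]
    ext i j
    rcases eq_or_ne i j with hij | hij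
    · subst hij
      by_cases hi : i ∈ J <;>
        simp [Matrix.diagonal_apply, Matrix.neg_apply, hi, Finset.mem_compl]
    · simp [Matrix.diagonal_apply, Matrix.neg_apply, hij]
  have key : (ind J * L + ind Jᶜ) * (1 - K) = D * (K - ind Jᶜ) := by
    have hLK : L * (1 - K) = K := by
      rw [hL, Matrix.mul_assoc, hmul, Matrix.mul_one]
    rw [add_mul, Matrix.mul_assoc, hLK, mul_sub (ind Jᶜ), Matrix.mul_one]
    rw [mul_sub D, hDind, hD, sub_mul, sub_neg_eq_add]
    abel
  have main : (-1 : ℝ) ^ (Jᶜ.card) * (K - ind Jᶜ).det = pm L J * (1 - K).det := by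
    rw [← hdetD, ← Matrix.det_mul, ← key, Matrix.det_mul, det_ind_mul_add]
  rw [main, hdet1L, div_eq_mul_inv, inv_inv]
end

section
/- Let K be an N×N real matrix such that (-1)^{|J|} det(K - 1_J) ≥ 0 for all J ⊆ {1,...,N} (i.e., K is an admissible DPP kernel). Then the matrix I - K is also admissible: (-1)^{|J|} det((I - K) - 1_J) ≥ 0 for all J ⊆ {1,...,N}. -/
open Matrix BigOperators

theorem stmt_6 {N : ℕ} (K : Matrix (Fin N) (Fin N) ℝ)
    (hadm : ∀ J : Finset (Fin N), 0 ≤ (-1 : ℝ) ^ J.card * (K - ind J).det) :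
    ∀ J : Finset (Fin N), 0 ≤ (-1 : ℝ) ^ J.card * ((1 - K) - ind J).det := by
  intro J
  have h := hadm Jᶜ
  have hm : (1 - K) - ind J = -(K - ind Jᶜ) := by
    ext i j
    by_cases hij : i = j <;>
      simp [ind, Matrix.sub_apply, Matrix.one_apply, Matrix.diagonal_apply, hij,
        Finset.mem_compl] <;> split_ifs <;> ring
  have hcard : Jᶜ.card + J.card = N := by
    have := Finset.card_le_univ J
    rw [Finset.card_compl, Fintype.card_fin]
    simp [Finset.card_fin] at this
    omega
  have hsign : (-1 : ℝ) ^ J.card * (-1 : ℝ) ^ N = (-1 : ℝ) ^ Jᶜ.card := by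
    rw [← pow_add]
    rw [show J.card + N = Jᶜ.card + 2 * J.card by omega, pow_add,
      pow_mul, neg_one_sq, one_pow, mul_one]
  rw [hm, Matrix.det_neg, Fintype.card_fin, ← mul_assoc, hsign]
  exact h
end

section
/- Let K be an N×N real matrix that is admissible (i.e., (-1)^{|J|} det(K - 1_J) ≥ 0 for all J). Then for every subset S of {1,...,N}, the principal submatrix K_S is admissible as an |S|×|S| matrix. -/
open Matrix BigOperators

/-- Admissibility of a square real matrix indexed by an arbitrary finite type. -/
def Adm {n : Type*} [Fintype n] [DecidableEq n] (M : Matrix n n ℝ) : Prop :=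
  ∀ J : Finset n,
    0 ≤ (-1 : ℝ) ^ J.card *
      (M - Matrix.diagonal (fun i => if i ∈ J then (1 : ℝ) else 0)).det

/-- Admissibility is preserved by reindexing along an equivalence. -/
lemma adm_reindex {m n : Type*} [Fintype m] [DecidableEq m] [Fintype n] [DecidableEq n]
    (M : Matrix n n ℝ) (hM : Adm M) (e : m ≃ n) : Adm (M.submatrix e e) := by
  intro J
  have key : M.submatrix e e - Matrix.diagonal (fun i => if i ∈ J then (1 : ℝ) else 0)
      = (M - Matrix.diagonal
          (fun i => if i ∈ J.map e.toEmbedding then (1 : ℝ) else 0)).submatrix e e := by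
    ext a b
    by_cases h : a = b
    · subst h
      simp [Matrix.submatrix_apply, Matrix.diagonal_apply, Matrix.sub_apply]
    · simp [Matrix.submatrix_apply, Matrix.diagonal_apply, Matrix.sub_apply, h,
        e.injective.ne h]
  have h := hM (J.map e.toEmbedding)
  rw [Finset.card_map] at h
  rw [key, Matrix.det_submatrix_equiv_self]
  exact h

/-- Cofactor expansion: the determinant of a matrix whose `i`-th column has been replaced
by the `i`-th standard basis vector equals the determinant of the principal minor
obtained by removing row and column `i`. -/
lemma det_updateCol_single_eq {n : Type*} [Fintype n] [DecidableEq n]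
    (A : Matrix n n ℝ) (i : n) :
    (A.updateCol i (Pi.single i 1)).det
      = (A.submatrix (fun j : {j : n // j ≠ i} => (j : n))
          (fun j : {j : n // j ≠ i} => (j : n))).det := by
  have hpos : Fintype.card n ≠ 0 := (Fintype.card_pos_iff.mpr ⟨i⟩).ne'
  obtain ⟨m, hm⟩ := Nat.exists_eq_succ_of_ne_zero hpos
  let e0 : n ≃ Fin (m + 1) := Fintype.equivFinOfCardEq hm
  let e : n ≃ Fin (m + 1) := e0.trans (Equiv.swap (e0 i) 0)
  have hei : e i = 0 := by simp [e]
  -- step 1 : the determinant is a diagonal entry of the adjugate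
  have h1 : (A.updateCol i (Pi.single i 1)).det = A.adjugate i i := by
    rw [← Matrix.det_transpose, ← Matrix.updateRow_transpose, ← Matrix.adjugate_apply,
      ← Matrix.adjugate_transpose, Matrix.transpose_apply]
  -- step 2 : transfer to `Fin (m+1)` and use the cofactor formula there
  have h2 : A.adjugate i i = ((A.submatrix e.symm e.symm).submatrix
      (Fin.succAbove 0) (Fin.succAbove 0)).det := by
    have := Matrix.adjugate_submatrix_equiv_self e.symm A
    have h3 : (A.submatrix e.symm e.symm).adjugate (e i) (e i) = A.adjugate i i := by
      rw [this]; simp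
    rw [← h3, hei, Matrix.adjugate_fin_succ_eq_det_submatrix]
    simp
  -- step 3 : identify the `Fin m` minor with the subtype minor
  have hne : ∀ k : Fin m, e.symm k.succ ≠ i := by
    intro k h
    apply Fin.succ_ne_zero k
    have := congrArg e h
    rwa [Equiv.apply_symm_apply, hei] at this
  have hnz : ∀ j : {j : n // j ≠ i}, e (j : n) ≠ 0 := by
    intro j h
    exact j.2 (e.injective (by rw [h, hei]))
  let f : Fin m ≃ {j : n // j ≠ i} :=
    { toFun := fun k => ⟨e.symm k.succ, hne k⟩
      invFun := fun j => (e (j : n)).pred (hnz j)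
      left_inv := fun k => by simp
      right_inv := fun j => by
        apply Subtype.ext
        simp }
  rw [h1, h2, ← Matrix.det_submatrix_equiv_self f
    (A.submatrix (fun j : {j : n // j ≠ i} => (j : n)) (fun j : {j : n // j ≠ i} => (j : n)))]
  congr 1

/-- Deleting a single row/column index preserves admissibility. -/
lemma adm_delete {n : Type*} [Fintype n] [DecidableEq n] (M : Matrix n n ℝ)
    (hM : Adm M) (i : n) :
    Adm (M.submatrix (fun j : {j : n // j ≠ i} => (j : n))
      (fun j : {j : n // j ≠ i} => (j : n))) := by
  intro J
  classical
  set J₀ : Finset n := J.map ⟨Subtype.val, Subtype.val_injective⟩ with hJ₀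
  have hiJ₀ : i ∉ J₀ := by
    intro h
    rw [hJ₀, Finset.mem_map] at h
    obtain ⟨a, _, ha⟩ := h
    exact a.2 ha
  set A : Matrix n n ℝ :=
    M - Matrix.diagonal (fun a => if a ∈ J₀ then (1 : ℝ) else 0) with hA
  set B : Matrix n n ℝ :=
    M - Matrix.diagonal (fun a => if a ∈ insert i J₀ then (1 : ℝ) else 0) with hB
  -- the minor we are interested in is the minor of `A`
  have hsub : M.submatrix (fun j : {j : n // j ≠ i} => (j : n))
        (fun j : {j : n // j ≠ i} => (j : n))
      - Matrix.diagonal (fun j => if j ∈ J then (1 : ℝ) else 0)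
      = A.submatrix (fun j : {j : n // j ≠ i} => (j : n))
        (fun j : {j : n // j ≠ i} => (j : n)) := by
    ext a b
    by_cases h : a = b
    · subst h
      have hmem : (a : n) ∈ J₀ ↔ a ∈ J := Finset.mem_map' _
      simp [hA, Matrix.sub_apply, Matrix.diagonal_apply, hmem]
    · have h' : (a : n) ≠ (b : n) := fun hh => h (Subtype.ext hh)
      simp [hA, Matrix.sub_apply, Matrix.diagonal_apply, h, h']
  -- `A` is `B` with its `i`-th column augmented by the basis vector `e i`
  have hins : A = B.updateCol i ((fun r => B r i) + Pi.single i (1 : ℝ)) := by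
    ext a b
    rw [Matrix.updateCol_apply]
    by_cases hb : b = i
    · by_cases ha : a = i
      · simp [hA, hB, Matrix.sub_apply, Matrix.diagonal_apply, ha, hb,
          Pi.single_apply, Finset.mem_insert, hiJ₀]
        try ring
      · simp [hA, hB, Matrix.sub_apply, Matrix.diagonal_apply, ha, hb, Pi.single_apply]
    · by_cases hab : a = b
      · have ha : ¬ a = i := by rw [hab]; exact hb
        simp [hA, hB, Matrix.sub_apply, Matrix.diagonal_apply, hab, ha, hb,
          Pi.single_apply, Finset.mem_insert]
      · simp [hA, hB, Matrix.sub_apply, Matrix.diagonal_apply, hab, hb]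
  -- `A` and `B` have the same minor at `i`
  have hABmin : B.submatrix (fun j : {j : n // j ≠ i} => (j : n))
        (fun j : {j : n // j ≠ i} => (j : n))
      = A.submatrix (fun j : {j : n // j ≠ i} => (j : n))
        (fun j : {j : n // j ≠ i} => (j : n)) := by
    ext a b
    by_cases h : (a : n) = (b : n)
    · have hb' : ¬ (b : n) = i := b.2
      simp [hA, hB, Matrix.sub_apply, Matrix.diagonal_apply, h, hb',
        Finset.mem_insert]
    · simp [hA, hB, Matrix.sub_apply, Matrix.diagonal_apply, h]
  -- the key determinant identity
  have hdet : A.det = B.det + (A.submatrix (fun j : {j : n // j ≠ i} => (j : n))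
      (fun j : {j : n // j ≠ i} => (j : n))).det := by
    conv_lhs => rw [hins]
    rw [Matrix.det_updateCol_add, Matrix.updateCol_eq_self,
      det_updateCol_single_eq B i, hABmin]
  have h1 := hM J₀
  have h2 := hM (insert i J₀)
  rw [Finset.card_insert_of_notMem hiJ₀] at h2
  have hcard : J₀.card = J.card := Finset.card_map _
  rw [hcard] at h1 h2
  rw [hsub]
  rw [← hA] at h1
  rw [← hB] at h2
  rw [pow_succ] at h2
  have h3 : (-1 : ℝ) ^ J.card * (A.submatrix (fun j : {j : n // j ≠ i} => (j : n))
        (fun j : {j : n // j ≠ i} => (j : n))).det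
      = (-1 : ℝ) ^ J.card * A.det - (-1 : ℝ) ^ J.card * B.det := by
    rw [hdet]; ring
  nlinarith [h1, h2, h3]

lemma adm_sub (k : ℕ) : ∀ {n : Type*} [Fintype n] [DecidableEq n]
    (M : Matrix n n ℝ), Adm M → ∀ S : Finset n, Sᶜ.card ≤ k →
    Adm (M.submatrix (fun i : S => (i : n)) (fun j : S => (j : n))) := by
  induction k with
  | zero =>
    intro n _ _ M hM S hS
    have hall : ∀ x : n, x ∈ S := by
      intro x
      by_contra hx
      have hx' : x ∈ Sᶜ := Finset.mem_compl.mpr hx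
      rw [Finset.card_eq_zero.mp (Nat.le_zero.mp hS)] at hx'
      exact absurd hx' (Finset.notMem_empty x)
    let e : {x : n // x ∈ S} ≃ n :=
      { toFun := fun x => (x : n)
        invFun := fun x => ⟨x, hall x⟩
        left_inv := fun x => rfl
        right_inv := fun x => rfl }
    exact adm_reindex M hM e
  | succ k ih =>
    intro n _ _ M hM S hS
    by_cases hle : Sᶜ.card ≤ k
    · exact ih M hM S hle
    · have hpos : 0 < Sᶜ.card := by omega
      obtain ⟨i, hi⟩ := Finset.card_pos.mp hpos
      have hiS : i ∉ S := Finset.mem_compl.mp hi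
      have hT : (insert i S)ᶜ.card ≤ k := by
        rw [Finset.compl_insert, Finset.card_erase_of_mem hi]
        omega
      have hAdmT := ih M hM (insert i S) hT
      set i' : {x : n // x ∈ insert i S} := ⟨i, Finset.mem_insert_self i S⟩ with hi'
      have hdel := adm_delete _ hAdmT i'
      let g : {x : n // x ∈ S} ≃ {j : {x : n // x ∈ insert i S} // j ≠ i'} :=
        { toFun := fun x => ⟨⟨(x : n), Finset.mem_insert_of_mem x.2⟩, by
            intro h
            apply hiS
            have hval : (x : n) = i := congrArg Subtype.val h
            rw [← hval]
            exact x.2⟩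
          invFun := fun j => ⟨((j : {x : n // x ∈ insert i S}) : n), by
            have hj := (j : {x : n // x ∈ insert i S}).2
            rcases Finset.mem_insert.mp hj with h | h
            · exact absurd (Subtype.ext h) j.2
            · exact h⟩
          left_inv := fun x => rfl
          right_inv := fun j => rfl }
      have hfinal := adm_reindex _ hdel g
      have heq : (((M.submatrix (fun j : (insert i S : Finset n) => (j : n))
            (fun j : (insert i S : Finset n) => (j : n))).submatrix
            (fun j : {j : {x : n // x ∈ insert i S} // j ≠ i'} =>
              (j : {x : n // x ∈ insert i S}))
            (fun j : {j : {x : n // x ∈ insert i S} // j ≠ i'} =>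
              (j : {x : n // x ∈ insert i S}))).submatrix g g)
          = M.submatrix (fun i : S => (i : n)) (fun j : S => (j : n)) := by
        ext a b
        rfl
      rwa [heq] at hfinal

theorem stmt_7 {N : ℕ} (K : Matrix (Fin N) (Fin N) ℝ) (hadm : Adm K)
    (S : Finset (Fin N)) :
    Adm (K.submatrix (fun i : S => (i : Fin N)) (fun j : S => (j : Fin N))) :=
  adm_sub Sᶜ.card K hadm S le_rfl
end

section
/- Let K be an N×N real matrix and S ⊆ {1,...,N} with det(K_S) ≠ 0. Then det(K + (I-K) 1_{S̄}) = det(K_S); in particular K + (I-K) 1_{S̄} is invertible. -/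
/- The columns of `K + (1 - K) * 1_{S̄}` outside `S` are columns of the identity, so the matrix is
block triangular with respect to `S ⊔ S̄`, with diagonal blocks `K_S` and `1`. -/

open Matrix BigOperators

namespace Matrix

variable {n R : Type*} [Fintype n] [DecidableEq n] [CommRing R]

theorem det_eq_det_toSquareBlockProp_of_apply_eq_one_apply (M : Matrix n n R) (p : n → Prop)
    [DecidablePred p] (h : ∀ i j, ¬p j → M i j = (1 : Matrix n n R) i j) :
    M.det = (M.toSquareBlockProp p).det := by
  have hcompl : M.toSquareBlockProp (fun i => ¬p i) = 1 := by
    ext i j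
    simp [toSquareBlockProp_def, h _ _ j.2, one_apply, Subtype.ext_iff]
  rw [twoBlockTriangular_det' M p fun i hi j hj => ?_, hcompl, det_one, mul_one]
  rw [h i j hj, one_apply_ne]
  rintro rfl
  exact hj hi

end Matrix

theorem add_sub_mul_ind_compl_apply {N : ℕ} (K : Matrix (Fin N) (Fin N) ℝ) (S : Finset (Fin N))
    (i j : Fin N) :
    (K + (1 - K) * ind Sᶜ) i j = if j ∈ S then K i j else (1 : Matrix (Fin N) (Fin N) ℝ) i j := by
  by_cases hj : j ∈ S <;> simp [ind, mul_diagonal, hj]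

theorem det_add_sub_mul_ind_compl {N : ℕ} (K : Matrix (Fin N) (Fin N) ℝ) (S : Finset (Fin N)) :
    (K + (1 - K) * ind Sᶜ).det = pm K S := by
  have hblock : (K + (1 - K) * ind Sᶜ).toSquareBlockProp (· ∈ S) =
      K.submatrix (fun i : S => (i : Fin N)) (fun j : S => (j : Fin N)) := by
    ext i j
    simp only [toSquareBlockProp_def, of_apply, submatrix_apply, add_sub_mul_ind_compl_apply,
      if_pos j.2]
  rw [det_eq_det_toSquareBlockProp_of_apply_eq_one_apply _ (· ∈ S)
    fun i j hj => by rw [add_sub_mul_ind_compl_apply, if_neg hj], hblock, pm]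
  -- the two determinants are taken with different `Fintype S` instances
  convert rfl

theorem stmt_8 {N : ℕ} (K : Matrix (Fin N) (Fin N) ℝ) (S : Finset (Fin N))
    (h : pm K S ≠ 0) :
    (K + (1 - K) * ind Sᶜ).det = pm K S ∧ IsUnit (K + (1 - K) * ind Sᶜ) := by
  have hdet := det_add_sub_mul_ind_compl K S
  refine ⟨hdet, ?_⟩
  rw [isUnit_iff_isUnit_det, hdet]
  exact h.isUnit
end

section
/- Let K be an N×N real matrix, S ⊆ {1,...,N} with det(K_S) ≠ 0, and set M = K + (I-K) 1_{S̄}. Then for every J ⊆ S̄, det(K_{S∪J}) / det(K_S) = det(K̃_J), where K̃ = I_{S̄} - [M^{-1}(I-K)]_{S̄} is the |S̄|×|S̄| matrix obtained by restricting I - M^{-1}(I-K) to rows and columns in S̄. -/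
open Matrix BigOperators

lemma lemA {N : ℕ} (K : Matrix (Fin N) (Fin N) ℝ) (T : Finset (Fin N)) :
    (K + (1 - K) * ind Tᶜ).det = pm K T := by
  set A := K + (1 - K) * ind Tᶜ with hA
  have hAij : ∀ i j, A i j = if j ∈ T then K i j else if i = j then 1 else 0 := by
    intro i j
    simp only [hA, ind, Matrix.add_apply, Matrix.mul_diagonal, Finset.mem_compl]
    by_cases hj : j ∈ T <;> by_cases hij : i = j <;>
      simp [hj, hij, Matrix.sub_apply, Matrix.one_apply]
  let e : {x : Fin N // x ∈ T} ⊕ {x : Fin N // x ∉ T} ≃ Fin N :=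
    Equiv.sumCompl (· ∈ T)
  have hre : A.submatrix e e =
      Matrix.fromBlocks
        (K.submatrix (fun i : T => (i : Fin N)) (fun j : T => (j : Fin N))) 0
        (K.submatrix (fun i : {x : Fin N // x ∉ T} => (i : Fin N))
          (fun j : T => (j : Fin N))) 1 := by
    ext i j
    cases i with
    | inl i =>
      cases j with
      | inl j => simp [Matrix.submatrix_apply, hAij, j.2, e]
      | inr j =>
        have hne : (i : Fin N) ≠ (j : Fin N) := by
          intro hh; exact j.2 (hh ▸ i.2)
        simp [Matrix.submatrix_apply, hAij, j.2, hne, e]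
    | inr i =>
      cases j with
      | inl j => simp [Matrix.submatrix_apply, hAij, j.2, e]
      | inr j =>
        simp [Matrix.submatrix_apply, hAij, j.2, Matrix.one_apply, Subtype.ext_iff, e]
  calc A.det = (A.submatrix e e).det := (Matrix.det_submatrix_equiv_self e A).symm
    _ = pm K T := by rw [hre, Matrix.det_fromBlocks_zero₁₂, Matrix.det_one, mul_one]; rfl

lemma indCompl {N : ℕ} (J : Finset (Fin N)) : ind Jᶜ = 1 - ind J := by
  ext i j
  simp only [ind, Matrix.sub_apply, Matrix.one_apply, Matrix.diagonal_apply,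
    Finset.mem_compl]
  by_cases hij : i = j <;> by_cases hj : i ∈ J <;> simp [hij, hj] <;> aesop

theorem stmt_9 {N : ℕ} (K : Matrix (Fin N) (Fin N) ℝ) (S : Finset (Fin N))
    (h : pm K S ≠ 0) (M : Matrix (Fin N) (Fin N) ℝ)
    (hM : M = K + (1 - K) * ind Sᶜ) :
    ∀ J : Finset (Fin N), J ⊆ Sᶜ →
      pm K (S ∪ J) / pm K S = pm (1 - M⁻¹ * (1 - K)) J := by
  intro J hJ
  have hdetM : M.det = pm K S := by rw [hM]; exact lemA K S
  have hMunit : IsUnit M.det := by rw [hdetM]; exact Ne.isUnit h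
  set L := 1 - M⁻¹ * (1 - K) with hL
  -- ind decomposition
  have hind : ind ((S ∪ J)ᶜ) = ind Sᶜ - ind J := by
    ext i j
    simp only [ind, Matrix.sub_apply, Matrix.diagonal_apply, Finset.mem_compl,
      Finset.mem_union]
    by_cases hij : i = j
    · subst hij
      by_cases hiJ : i ∈ J
      · have hiS : i ∉ S := Finset.mem_compl.mp (hJ hiJ)
        simp [hiJ, hiS]
      · by_cases hiS : i ∈ S <;> simp [hiJ, hiS]
    · simp [hij]
  -- key matrix identity
  have hkey : K + (1 - K) * ind ((S ∪ J)ᶜ) = M * (1 - M⁻¹ * (1 - K) * ind J) := by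
    have hrhs : M * (1 - M⁻¹ * (1 - K) * ind J) = M - (1 - K) * ind J := by
      rw [Matrix.mul_sub, Matrix.mul_one, ← Matrix.mul_assoc, ← Matrix.mul_assoc,
        Matrix.mul_nonsing_inv _ hMunit, Matrix.one_mul]
    rw [hrhs, hind, hM, Matrix.mul_sub]
    noncomm_ring
  have h1 : pm K (S ∪ J) = M.det * (1 - M⁻¹ * (1 - K) * ind J).det := by
    rw [← lemA K (S ∪ J), hkey, Matrix.det_mul]
  have h2 : pm L J = (1 - M⁻¹ * (1 - K) * ind J).det := by
    rw [← lemA L J]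
    congr 1
    rw [indCompl, Matrix.mul_sub, Matrix.mul_one, hL]
    noncomm_ring
  rw [h1, h2, hdetM, mul_comm, mul_div_assoc, div_self h, mul_one]
end

section
/- Let K be an admissible N×N real kernel and Y ~ DPP(K), i.e., P[Y = J] = (-1)^{|J̄|} det(K - 1_{J̄}) ≥ 0 for all J. Suppose the only (complex) eigenvalues of K are 0 and 1, with 1 having algebraic multiplicity p. Then |Y| = p almost surely, i.e., P[|Y| = p] = 1. -/
open Matrix BigOperators

/-!
Writing row `i` of `1 - K + z • K` as `(eᵢ - Kᵢ) + z • Kᵢ` and expanding the determinant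
multilinearly in the rows gives `∑_J z ^ |J| * (-1) ^ |Jᶜ| * det (K - 1_{Jᶜ})`, the generating
function of `|Y|`. On the other hand `det (1 - (1 - z) • K)` is the reversed characteristic
polynomial of `K` evaluated at `1 - z`, and the reverse of `X ^ (N - p) * (X - 1) ^ p` is
`(1 - X) ^ p`, so the generating function is `z ^ p`. Its coefficient of `z ^ p` is the sum to
be computed.
-/

open Polynomial

namespace Polynomial

theorem reverse_X_sub_one_pow {R : Type*} [CommRing R] (p : ℕ) :
    ((X - 1 : R[X]) ^ p).reverse = (1 - X) ^ p := by
  nontriviality R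
  have hX : (X : R[X]).reverse = 1 := by
    rw [← one_mul (X : R[X]), reverse_mul_X, ← C_1, reverse_C]
  have hlin : (X - 1 : R[X]).reverse = 1 - X := by
    rw [sub_eq_add_neg, ← C_1, ← C_neg, reverse_add_C, hX, natDegree_X]
    simp [sub_eq_add_neg]
  have hmonic : (X - 1 : R[X]).Monic := by simpa using monic_X_sub_C (1 : R)
  induction p with
  | zero => simpa using reverse_C (1 : R)
  | succ k ih =>
    rw [pow_succ, reverse_mul (by simp [(hmonic.pow k).leadingCoeff, hmonic.leadingCoeff]),
      ih, hlin, pow_succ]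

end Polynomial

namespace Matrix

variable {n R : Type*} [Fintype n] [DecidableEq n] [CommRing R]

theorem det_one_sub_add_smul (K : Matrix n n R) (z : R) :
    (1 - K + z • K).det = ∑ S : Finset n,
      z ^ S.card * ((-1) ^ Sᶜ.card * (K - diagonal fun i => if i ∈ Sᶜ then 1 else 0).det) := by
  have hrows : (1 - K + z • K).det = ∑ S : Finset n,
      detRowAlternating (S.piecewise (fun i => z • K i) fun i => (1 - K) i) := by
    rw [← (detRowAlternating (n := n) (R := R)).map_add_univ, add_comm]; rfl
  rw [hrows]
  refine Finset.sum_congr rfl fun S _ => ?_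
  set A := K - diagonal fun i => if i ∈ Sᶜ then 1 else 0
  -- off `S`, the rows `eᵢ - Kᵢ` of `1 - K` are the rows of `-A`
  set M : n → n → R := Sᶜ.piecewise (fun i => (-1 : R) • A i) fun i => A i
  have hM : S.piecewise (fun i => z • K i) (fun i => (1 - K) i) =
      S.piecewise (fun i => (fun _ => z) i • M i) M := by
    ext i j
    by_cases hi : i ∈ S
    · simp [hi, M, A, diagonal_apply]
    · simp [hi, M, A, diagonal_apply, one_apply]
  have hA : detRowAlternating M = (∏ _i ∈ Sᶜ, (-1 : R)) • A.det :=
    detRowAlternating.toMultilinearMap.map_piecewise_smul (fun _ => -1) (fun i => A i) Sᶜ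
  have hz : detRowAlternating (S.piecewise (fun i => (fun _ => z) i • M i) M) =
      (∏ _i ∈ S, z) • detRowAlternating M :=
    detRowAlternating.toMultilinearMap.map_piecewise_smul (fun _ => z) M S
  rw [hM, hz, hA]
  simp

theorem det_one_sub_map_C_add_X_smul (K : Matrix n n R) :
    (1 - K.map C + (X : R[X]) • K.map C).det = ∑ S : Finset n,
      C ((-1) ^ Sᶜ.card * (K - diagonal fun i => if i ∈ Sᶜ then 1 else 0).det) * X ^ S.card := by
  rw [det_one_sub_add_smul]
  refine Finset.sum_congr rfl fun S _ => ?_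
  rw [mul_comm, map_mul, map_pow, map_neg, map_one, RingHom.map_det]
  congr 3
  ext i j
  simp [diagonal_apply, apply_ite]

theorem charpolyRev_comp_one_sub (K : Matrix n n R) :
    K.charpolyRev.comp (1 - X) = (1 - K.map C + (X : R[X]) • K.map C).det := by
  rw [charpolyRev, ← coe_compRingHom_apply, RingHom.map_det]
  congr 1
  refine Matrix.ext fun i j => ?_
  by_cases h : i = j <;> simp [h] <;> ring

end Matrix

theorem stmt_12_general {N p : ℕ} (K : Matrix (Fin N) (Fin N) ℝ)
    (hchar : K.charpoly = Polynomial.X ^ (N - p) * (Polynomial.X - 1) ^ p) :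
    ∑ J ∈ Finset.univ.filter (fun J : Finset (Fin N) => J.card = p),
      (-1 : ℝ) ^ (Jᶜ.card) * (K - ind Jᶜ).det = 1 := by
  have hgen : (1 - K.map C + (X : ℝ[X]) • K.map C).det = X ^ p := by
    rw [← charpolyRev_comp_one_sub, ← reverse_charpoly, hchar, reverse_X_pow_mul,
      reverse_X_sub_one_pow]
    simp
  have hcoeff := congrArg (coeff · p) ((det_one_sub_map_C_add_X_smul K).symm.trans hgen)
  simp only [finsetSum_coeff, coeff_C_mul_X_pow, coeff_X_pow_self] at hcoeff
  simp_rw [eq_comm (a := p)] at hcoeff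
  rwa [Finset.sum_filter]

theorem stmt_12 {N p : ℕ} (hp : p ≤ N) (K : Matrix (Fin N) (Fin N) ℝ)
    (hadm : ∀ J : Finset (Fin N), 0 ≤ (-1 : ℝ) ^ J.card * (K - ind J).det)
    (hchar : K.charpoly = Polynomial.X ^ (N - p) * (Polynomial.X - 1) ^ p) :
    ∑ J ∈ Finset.univ.filter (fun J : Finset (Fin N) => J.card = p),
      (-1 : ℝ) ^ (Jᶜ.card) * (K - ind Jᶜ).det = 1 :=
  stmt_12_general K hchar
end
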